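/- For 1 ≤ κ ≤ m-1, at the frequency f = u/γ(κ) (where k(f) jumps from κ to κ-1), we have M(u/γ(κ)) = κ, and for any f' with u/γ(κ+1) ≤ f' < u/γ(κ), M(f') > κ. Hence M is monotonically decreasing across the jump points of k. -/

import Mathlib

/-- `k` satisfies the defining equation of `k(f)`. -/
def kSpec (m : ℕ) (γ : ℕ → ℝ) (u : ℝ) (k : ℝ → ℕ) : Prop :=
  ∀ f : ℝ, 0 < f →
    (u ≤ γ 1 * f → k f = 0) ∧
    (γ 1 * f < u → IsGreatest {j : ℕ | 1 ≤ j ∧ j ≤ m ∧ γ j * f < u} (k f))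

/-- The minimum fractional number of processors `M(f)`. -/
noncomputable def Mfun (γ : ℕ → ℝ) (u : ℝ) (k : ℝ → ℕ) (f : ℝ) : ℝ :=
  (k f : ℝ) + (u - γ (k f) * f) / ((γ (k f + 1) - γ (k f)) * f)

/-! `k(f) = j` exactly when `γ j · f < u ≤ γ (j+1) · f`; on that interval `M` is affine in
`u / f` with slope `1 / (γ (j+1) - γ j)`, running from `j` (excluded) to `j + 1` (attained at
`f = u / γ (j+1)`). The jump frequency `u / γ κ` is the right end of the interval of `κ - 1`,
so `M = κ` there, while just below it `k = κ` and `M > κ`. -/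

theorem kSpec.eq_of_mul_lt_of_le_mul {m : ℕ} {γ : ℕ → ℝ} {u : ℝ} {k : ℝ → ℕ}
    (hk : kSpec m γ u k) (hmono : MonotoneOn γ (Set.Icc 0 m)) {f : ℝ} (hf : 0 < f) {j : ℕ}
    (hj : j + 1 ≤ m) (hlo : γ j * f < u) (hhi : u ≤ γ (j + 1) * f) : k f = j := by
  have hγ : ∀ {a b : ℕ}, a ≤ b → b ≤ m → γ a * f ≤ γ b * f := fun hab hb =>
    mul_le_mul_of_nonneg_right
      (hmono ⟨Nat.zero_le _, hab.trans hb⟩ ⟨Nat.zero_le _, hb⟩ hab) hf.le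
  obtain ⟨hzero, hgreatest⟩ := hk f hf
  rcases Nat.eq_zero_or_pos j with rfl | hj1
  · exact hzero hhi
  obtain ⟨⟨-, hkm, hklt⟩, hmax⟩ := hgreatest ((hγ hj1 (by omega)).trans_lt hlo)
  have hge : j ≤ k f := hmax ⟨hj1, by omega, hlo⟩
  have hle : k f ≤ j := by
    by_contra! hgt
    exact (hhi.trans (hγ hgt hkm)).not_gt hklt
  omega

theorem Mfun_eq_succ_of_mul_eq {γ : ℕ → ℝ} {u : ℝ} {k : ℝ → ℕ} {f : ℝ} {j : ℕ}
    (hkf : k f = j) (hf : f ≠ 0) (hγ : γ j ≠ γ (j + 1)) (hfu : γ (j + 1) * f = u) :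
    Mfun γ u k f = j + 1 := by
  have hd : γ (j + 1) - γ j ≠ 0 := sub_ne_zero.mpr hγ.symm
  rw [Mfun, hkf, ← hfu, ← sub_mul, mul_div_mul_right _ _ hf, div_self hd]

theorem lt_Mfun {γ : ℕ → ℝ} {u : ℝ} {k : ℝ → ℕ} {f : ℝ} {j : ℕ}
    (hkf : k f = j) (hf : 0 < f) (hγ : γ j < γ (j + 1)) (hfu : γ j * f < u) :
    (j : ℝ) < Mfun γ u k f := by
  rw [Mfun, hkf, lt_add_iff_pos_right]
  exact div_pos (sub_pos.mpr hfu) (mul_pos (sub_pos.mpr hγ) hf)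

theorem stmt_5_general (m : ℕ) (γ : ℕ → ℝ) (hγ0 : γ 0 = 0)
    (hmono : StrictMonoOn γ (Set.Icc 0 m))
    (u : ℝ) (hu : 0 < u) (k : ℝ → ℕ) (hk : kSpec m γ u k)
    (κ : ℕ) (hκ1 : 1 ≤ κ) (hκm : κ ≤ m - 1) :
    Mfun γ u k (u / γ κ) = κ ∧
    ∀ f' : ℝ, u / γ (κ + 1) ≤ f' → f' < u / γ κ → Mfun γ u k f' > κ := by
  have hγ : ∀ {a b : ℕ}, a < b → b ≤ m → γ a < γ b := fun hab hb =>
    hmono ⟨Nat.zero_le _, hab.le.trans hb⟩ ⟨Nat.zero_le _, hb⟩ hab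
  have hγκ : 0 < γ κ := hγ0 ▸ hγ hκ1 (by omega)
  constructor
  · obtain ⟨j, rfl⟩ : ∃ j, κ = j + 1 := ⟨κ - 1, by omega⟩
    have hf : 0 < u / γ (j + 1) := div_pos hu hγκ
    have hγjj : γ j < γ (j + 1) := hγ j.lt_succ_self (by omega)
    have hfu : γ (j + 1) * (u / γ (j + 1)) = u := mul_div_cancel₀ u hγκ.ne'
    have hlo : γ j * (u / γ (j + 1)) < u := (mul_lt_mul_of_pos_right hγjj hf).trans_eq hfu
    have hkf := hk.eq_of_mul_lt_of_le_mul hmono.monotoneOn hf (by omega) hlo hfu.ge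
    rw [Mfun_eq_succ_of_mul_eq hkf hf.ne' hγjj.ne hfu]
    norm_cast
  · intro f' hlo hhi
    have hγκκ : γ κ < γ (κ + 1) := hγ κ.lt_succ_self (by omega)
    have hf' : 0 < f' := (div_pos hu (hγκ.trans hγκκ)).trans_le hlo
    have hlo' : γ κ * f' < u := (lt_div_iff₀' hγκ).mp hhi
    have hhi' : u ≤ γ (κ + 1) * f' := (div_le_iff₀' (hγκ.trans hγκκ)).mp hlo
    exact lt_Mfun (hk.eq_of_mul_lt_of_le_mul hmono.monotoneOn hf' (by omega) hlo' hhi') hf'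
      hγκκ hlo'

/-- At the jump frequency `f = u/γ(κ)` one has `M(f) = κ`, while any `f'` with
`u/γ(κ+1) ≤ f' < u/γ(κ)` satisfies `M(f') > κ`: `M` decreases across jump points. -/
theorem stmt_5 (m : ℕ) (hm : 1 ≤ m) (γ : ℕ → ℝ) (hγ0 : γ 0 = 0)
    (hmono : StrictMonoOn γ (Set.Icc 0 m))
    (u : ℝ) (hu : 0 < u) (k : ℝ → ℕ) (hk : kSpec m γ u k)
    (κ : ℕ) (hκ1 : 1 ≤ κ) (hκm : κ ≤ m - 1) :
    Mfun γ u k (u / γ κ) = κ ∧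
    ∀ f' : ℝ, u / γ (κ + 1) ≤ f' → f' < u / γ κ → Mfun γ u k f' > κ :=
  stmt_5_general m γ hγ0 hmono u hu k hk κ hκ1 hκm
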